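/- arXiv:2111.12129 — 2 statements merged into one kernel-verified Lean document; each statement's English description precedes it below -/
import Mathlib

section
/- Let V be a Banach space and μ the Hausdorff measure of noncompactness. For any nonempty bounded set U ⊆ V, μ(U) = μ(convexHull(U)). In particular μ is invariant under taking the closed convex hull. -/
open Metric Set

/-- Hausdorff measure of noncompactness: infimum of ε > 0 such that B has a finite ε-net. -/
noncomputable def hausdorffMNC {X : Type*} [MetricSpace X] (B : Set X) : ℝ :=
  sInf {ε : ℝ | 0 < ε ∧ ∃ F : Finset X, B ⊆ ⋃ x ∈ F, Metric.ball x ε}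

/-!
If `U` has a finite `ε`-net `F`, then `U` lies in the `ε`-thickening of `convexHull ℝ F`, which
is convex and so contains `convexHull ℝ U`. As the hull of a finite set is compact, it has a finite
`δ`-net for every `δ > 0`, and this is a finite `(ε + δ)`-net of `convexHull ℝ U`. Likewise the
closure of the `ε`-thickening of `F` lies in its `(ε + δ)`-thickening. Enlarging a set can only
shrink its set of net radii, so in both cases the infima agree.
-/

section MetricSpace

variable {X : Type*} [MetricSpace X]

def netRadii (B : Set X) : Set ℝ :=
  {ε | 0 < ε ∧ ∃ F : Set X, F.Finite ∧ B ⊆ thickening ε F}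

theorem hausdorffMNC_eq_sInf_netRadii (B : Set X) : hausdorffMNC B = sInf (netRadii B) := by
  unfold hausdorffMNC netRadii
  congr 1
  ext ε
  refine and_congr_right fun _ => ⟨?_, ?_⟩
  · rintro ⟨F, hF⟩
    exact ⟨F, F.finite_toSet, by simpa [thickening_eq_biUnion_ball] using hF⟩
  · rintro ⟨F, hF, hBF⟩
    exact ⟨hF.toFinset, by simpa [thickening_eq_biUnion_ball] using hBF⟩

theorem netRadii_anti {A B : Set X} (h : A ⊆ B) : netRadii B ⊆ netRadii A :=
  fun _ ⟨hε, F, hF, hBF⟩ => ⟨hε, F, hF, h.trans hBF⟩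

theorem hausdorffMNC_eq_of_subset {A B : Set X} (hAB : A ⊆ B)
    (h : ∀ ε ∈ netRadii A, ∀ δ, 0 < δ → ε + δ ∈ netRadii B) :
    hausdorffMNC A = hausdorffMNC B := by
  simp only [hausdorffMNC_eq_sInf_netRadii]
  rcases (netRadii A).eq_empty_or_nonempty with hA | ⟨ε₀, hε₀⟩
  -- `A` unbounded: both sides are the junk value `sInf ∅ = 0`
  · have hB : netRadii B = ∅ := subset_empty_iff.mp (hA ▸ netRadii_anti hAB)
    rw [hA, hB]
  have hbdd : ∀ C : Set X, BddBelow (netRadii C) := fun _ => ⟨0, fun _ hε => hε.1.le⟩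
  refine le_antisymm (csInf_le_csInf (hbdd A) ⟨_, h ε₀ hε₀ 1 one_pos⟩ (netRadii_anti hAB)) ?_
  refine le_csInf ⟨ε₀, hε₀⟩ fun ε hε => le_of_forall_pos_le_add fun δ hδ => ?_
  exact csInf_le (hbdd B) (h ε hε δ hδ)

theorem add_mem_netRadii_of_subset_thickening {B K : Set X} (hK : TotallyBounded K) {ε δ : ℝ}
    (hε : 0 < ε) (hδ : 0 < δ) (hBK : B ⊆ thickening ε K) : ε + δ ∈ netRadii B := by
  obtain ⟨t, ht, hKt⟩ := totallyBounded_iff.mp hK δ hδ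
  refine ⟨by positivity, t, ht, hBK.trans ?_⟩
  calc thickening ε K ⊆ thickening ε (thickening δ t) :=
        thickening_subset_of_subset ε (by rwa [thickening_eq_biUnion_ball])
    _ ⊆ thickening (ε + δ) t := thickening_thickening_subset ε δ t

theorem add_mem_netRadii_closure {B : Set X} {ε δ : ℝ} (hε : ε ∈ netRadii B) (hδ : 0 < δ) :
    ε + δ ∈ netRadii (closure B) := by
  obtain ⟨hε, F, hF, hBF⟩ := hε
  refine ⟨by positivity, F, hF, ?_⟩
  calc closure B ⊆ cthickening ε F :=
        (closure_mono hBF).trans (closure_thickening_subset_cthickening ε F)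
    _ ⊆ thickening (ε + δ) F := cthickening_subset_thickening' (by positivity) (by linarith) F

end MetricSpace

theorem add_mem_netRadii_convexHull {V : Type*} [NormedAddCommGroup V] [NormedSpace ℝ V]
    {U : Set V} {ε δ : ℝ} (hε : ε ∈ netRadii U) (hδ : 0 < δ) :
    ε + δ ∈ netRadii (convexHull ℝ U) := by
  obtain ⟨hε, F, hF, hUF⟩ := hε
  have hK : TotallyBounded (convexHull ℝ F) := (hF.isCompact_convexHull (𝕜 := ℝ)).totallyBounded
  refine add_mem_netRadii_of_subset_thickening hK hε hδ ?_
  exact convexHull_min (hUF.trans (thickening_subset_of_subset ε (subset_convexHull ℝ F)))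
    ((convex_convexHull ℝ F).thickening ε)

theorem hausdorffMNC_convexHull_general {V : Type*} [NormedAddCommGroup V] [NormedSpace ℝ V]
    (U : Set V) :
    hausdorffMNC U = hausdorffMNC (convexHull ℝ U) ∧
      hausdorffMNC U = hausdorffMNC (closure (convexHull ℝ U)) := by
  have hconv : hausdorffMNC U = hausdorffMNC (convexHull ℝ U) :=
    hausdorffMNC_eq_of_subset (subset_convexHull ℝ U) fun _ hε _ hδ =>
      add_mem_netRadii_convexHull hε hδ
  have hclosure : hausdorffMNC (convexHull ℝ U) = hausdorffMNC (closure (convexHull ℝ U)) :=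
    hausdorffMNC_eq_of_subset subset_closure fun _ hε _ hδ => add_mem_netRadii_closure hε hδ
  exact ⟨hconv, hconv.trans hclosure⟩

theorem hausdorffMNC_convexHull {V : Type*} [NormedAddCommGroup V] [NormedSpace ℝ V]
    [CompleteSpace V] (U : Set V) (hne : U.Nonempty) (hb : Bornology.IsBounded U) :
    hausdorffMNC U = hausdorffMNC (convexHull ℝ U) ∧
      hausdorffMNC U = hausdorffMNC (closure (convexHull ℝ U)) :=
  hausdorffMNC_convexHull_general U
end

section
/- Let I = [0,a] with 0 < a < ∞ and let U : I → Set(V) assign to each t a bounded subset of a Banach space V such that the family U = {ξ : I → V : ξ(t) ∈ U(t)} is bounded and equicontinuous in C(I, V). Then for every τ ∈ I, the Hausdorff measure of noncompactness satisfies μ(∫₀^τ U(s) ds) ≤ ∫₀^τ μ(U(s)) ds, where ∫₀^τ U(s) ds = {∫₀^τ ξ(s) ds : ξ ∈ U} and each ξ is Bochner integrable. -/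
open Metric Set MeasureTheory

/-!
Uniform equicontinuity on the compact interval `[0, τ]` lets one replace each integral
`∫₀^τ ξ` by a right-endpoint Riemann sum on a fine uniform partition, with an error that is
uniform in `ξ ∈ H`; it also makes `s ↦ μ(H(s))` uniformly continuous, so its Riemann sums
approximate its integral. For Riemann sums the inequality is exact: the set of sums lies in the
Minkowski sum `∑ᵢ (τ/n) • H(tᵢ)`, and `μ` is monotone, subadditive on Minkowski sums and
positively homogeneous.
-/

open Bornology Pointwise

section MetricSpace

variable {X : Type*} [MetricSpace X]

theorem hausdorffMNC_nonneg (B : Set X) : 0 ≤ hausdorffMNC B :=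
  Real.sInf_nonneg fun _ hε => hε.1.le

theorem hausdorffMNC_le_of_forall_lt {B : Set X} {r : ℝ} (hr : 0 ≤ r)
    (h : ∀ ε, r < ε → ∃ F : Finset X, B ⊆ ⋃ x ∈ F, ball x ε) : hausdorffMNC B ≤ r :=
  le_of_forall_gt_imp_ge_of_dense fun ε hε =>
    csInf_le ⟨0, fun _ hδ => hδ.1.le⟩ ⟨hr.trans_lt hε, h ε hε⟩

theorem Bornology.IsBounded.exists_finset_subset_iUnion_ball {B : Set X} (hB : IsBounded B)
    {ε : ℝ} (hε : hausdorffMNC B < ε) : ∃ F : Finset X, B ⊆ ⋃ x ∈ F, ball x ε := by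
  have hne : {ε : ℝ | 0 < ε ∧ ∃ F : Finset X, B ⊆ ⋃ x ∈ F, ball x ε}.Nonempty := by
    rcases B.eq_empty_or_nonempty with rfl | ⟨x, hx⟩
    · exact ⟨1, one_pos, ∅, empty_subset _⟩
    obtain ⟨r, hr⟩ := hB.subset_ball x
    refine ⟨max r 1, by positivity, {x}, ?_⟩
    simpa using hr.trans (ball_subset_ball (le_max_left _ _))
  obtain ⟨δ, ⟨-, F, hF⟩, hδε⟩ := exists_lt_of_csInf_lt hne hε
  exact ⟨F, hF.trans (iUnion₂_mono fun x _ => ball_subset_ball hδε.le)⟩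

theorem hausdorffMNC_le_add_of_forall_exists_dist_le {A B : Set X} (hB : IsBounded B) {δ : ℝ}
    (hδ : 0 ≤ δ) (h : ∀ x ∈ A, ∃ y ∈ B, dist x y ≤ δ) :
    hausdorffMNC A ≤ hausdorffMNC B + δ := by
  refine hausdorffMNC_le_of_forall_lt (by linarith [hausdorffMNC_nonneg B]) fun ε hε => ?_
  obtain ⟨F, hF⟩ := hB.exists_finset_subset_iUnion_ball (lt_sub_iff_add_lt.2 hε)
  refine ⟨F, fun x hx => ?_⟩
  obtain ⟨y, hy, hxy⟩ := h x hx
  obtain ⟨z, hz, hyz⟩ := mem_iUnion₂.1 (hF hy)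
  refine mem_iUnion₂.2 ⟨z, hz, ?_⟩
  calc dist x z ≤ dist x y + dist y z := dist_triangle x y z
    _ < δ + (ε - δ) := add_lt_add_of_le_of_lt hxy hyz
    _ = ε := by ring

theorem hausdorffMNC_mono {A B : Set X} (hAB : A ⊆ B) (hB : IsBounded B) :
    hausdorffMNC A ≤ hausdorffMNC B := by
  simpa using hausdorffMNC_le_add_of_forall_exists_dist_le hB le_rfl
    fun x hx => ⟨x, hAB hx, (dist_self x).le⟩

theorem dist_hausdorffMNC_image_le {α : Type*} {S : Set α} {f g : α → X}
    (hf : IsBounded (f '' S)) (hg : IsBounded (g '' S)) {δ : ℝ} (hδ : 0 ≤ δ)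
    (h : ∀ x ∈ S, dist (f x) (g x) ≤ δ) :
    dist (hausdorffMNC (f '' S)) (hausdorffMNC (g '' S)) ≤ δ := by
  have hfg := hausdorffMNC_le_add_of_forall_exists_dist_le (A := f '' S) hg hδ <| by
    rintro _ ⟨x, hx, rfl⟩
    exact ⟨g x, mem_image_of_mem g hx, h x hx⟩
  have hgf := hausdorffMNC_le_add_of_forall_exists_dist_le (A := g '' S) hf hδ <| by
    rintro _ ⟨x, hx, rfl⟩
    exact ⟨f x, mem_image_of_mem f hx, dist_comm (f x) (g x) ▸ h x hx⟩
  rw [Real.dist_eq, abs_sub_le_iff]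
  constructor <;> linarith

theorem LipschitzWith.hausdorffMNC_image_le {Y : Type*} [MetricSpace Y] {f : X → Y} {K : NNReal}
    (hf : LipschitzWith K f) {A : Set X} (hA : IsBounded A) :
    hausdorffMNC (f '' A) ≤ K * hausdorffMNC A := by
  classical
  have hnet : ∀ r, hausdorffMNC A < r → hausdorffMNC (f '' A) ≤ K * r := by
    intro r hr
    obtain ⟨F, hF⟩ := hA.exists_finset_subset_iUnion_ball hr
    refine hausdorffMNC_le_of_forall_lt (by positivity [(hausdorffMNC_nonneg A).trans_lt hr])
      fun ε hε => ⟨F.image f, ?_⟩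
    rintro _ ⟨x, hx, rfl⟩
    obtain ⟨z, hz, hxz⟩ := mem_iUnion₂.1 (hF hx)
    refine mem_iUnion₂.2 ⟨f z, Finset.mem_image_of_mem f hz, ?_⟩
    calc dist (f x) (f z) ≤ K * dist x z := hf.dist_le_mul x z
      _ ≤ K * r := by gcongr; exact (mem_ball.1 hxz).le
      _ < ε := hε
  refine le_of_forall_pos_le_add fun η hη => ?_
  have hKη : (K : ℝ) * (η / (K + 1)) ≤ η := by
    rw [mul_div_assoc', div_le_iff₀ (by positivity)]
    nlinarith
  calc hausdorffMNC (f '' A) ≤ K * (hausdorffMNC A + η / (K + 1)) :=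
        hnet _ (lt_add_of_pos_right _ (by positivity))
    _ ≤ K * hausdorffMNC A + η := by rw [mul_add]; gcongr

end MetricSpace

section NormedAddCommGroup

variable {E : Type*} [NormedAddCommGroup E]

theorem hausdorffMNC_add_le {A B : Set E} (hA : IsBounded A) (hB : IsBounded B) :
    hausdorffMNC (A + B) ≤ hausdorffMNC A + hausdorffMNC B := by
  classical
  have hAB := add_nonneg (hausdorffMNC_nonneg A) (hausdorffMNC_nonneg B)
  refine hausdorffMNC_le_of_forall_lt hAB fun ε hε => ?_
  have hd : 0 < (ε - (hausdorffMNC A + hausdorffMNC B)) / 2 := by linarith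
  obtain ⟨FA, hFA⟩ := hA.exists_finset_subset_iUnion_ball (lt_add_of_pos_right _ hd)
  obtain ⟨FB, hFB⟩ := hB.exists_finset_subset_iUnion_ball (lt_add_of_pos_right _ hd)
  refine ⟨FA + FB, ?_⟩
  rintro _ ⟨x, hx, y, hy, rfl⟩
  obtain ⟨z, hz, hxz⟩ := mem_iUnion₂.1 (hFA hx)
  obtain ⟨w, hw, hyw⟩ := mem_iUnion₂.1 (hFB hy)
  refine mem_iUnion₂.2 ⟨z + w, Finset.add_mem_add hz hw, ?_⟩
  calc dist (x + y) (z + w) ≤ dist x z + dist y w := dist_add_add_le x y z w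
    _ < ε := by linarith [mem_ball.1 hxz, mem_ball.1 hyw]

theorem isBounded_finset_sum {ι : Type*} {s : Finset ι} {A : ι → Set E}
    (hA : ∀ i ∈ s, IsBounded (A i)) : IsBounded (∑ i ∈ s, A i) := by
  classical
  induction s using Finset.induction_on with
  | empty => exact isBounded_singleton
  | insert i s hi ih =>
    rw [Finset.sum_insert hi]
    exact isBounded_add (hA i (s.mem_insert_self i))
      (ih fun j hj => hA j (Finset.mem_insert_of_mem hj))

theorem hausdorffMNC_finset_sum_le {ι : Type*} {s : Finset ι} {A : ι → Set E}
    (hA : ∀ i ∈ s, IsBounded (A i)) :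
    hausdorffMNC (∑ i ∈ s, A i) ≤ ∑ i ∈ s, hausdorffMNC (A i) := by
  classical
  induction s using Finset.induction_on with
  | empty =>
    refine hausdorffMNC_le_of_forall_lt le_rfl fun ε hε => ⟨{0}, ?_⟩
    simpa using hε
  | insert i s hi ih =>
    have hs : ∀ j ∈ s, IsBounded (A j) := fun j hj => hA j (Finset.mem_insert_of_mem hj)
    rw [Finset.sum_insert hi, Finset.sum_insert hi]
    calc hausdorffMNC (A i + ∑ j ∈ s, A j)
        ≤ hausdorffMNC (A i) + hausdorffMNC (∑ j ∈ s, A j) :=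
          hausdorffMNC_add_le (hA i (s.mem_insert_self i)) (isBounded_finset_sum hs)
      _ ≤ hausdorffMNC (A i) + ∑ j ∈ s, hausdorffMNC (A j) := by gcongr; exact ih hs

theorem hausdorffMNC_smul_le [NormedSpace ℝ E] (c : ℝ) {A : Set E} (hA : IsBounded A) :
    hausdorffMNC (c • A) ≤ ‖c‖ * hausdorffMNC A := by
  rw [← image_smul]
  exact (lipschitzWith_smul c).hausdorffMNC_image_le hA

end NormedAddCommGroup

theorem EquicontinuousOn.exists_forall_dist_le_of_isCompact {ι β α : Type*} [PseudoMetricSpace β]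
    [PseudoMetricSpace α] {F : ι → β → α} {K : Set β} (hF : EquicontinuousOn F K)
    (hK : IsCompact K) {ε : ℝ} (hε : 0 < ε) :
    ∃ δ > 0, ∀ x ∈ K, ∀ y ∈ K, dist x y ≤ δ → ∀ i, dist (F i x) (F i y) ≤ ε := by
  have := isCompact_iff_compactSpace.mp hK
  have hunif := CompactSpace.uniformEquicontinuous_of_equicontinuous
    ((equicontinuous_restrict_iff F).2 hF)
  obtain ⟨δ, hδ, hd⟩ := Metric.uniformEquicontinuous_iff.1 hunif ε hε
  refine ⟨δ / 2, half_pos hδ, fun x hx y hy hxy i => (hd ⟨x, hx⟩ ⟨y, hy⟩ ?_ i).le⟩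
  exact (Subtype.dist_eq _ _).trans_lt (hxy.trans_lt (half_lt_self hδ))

theorem EquicontinuousOn.uniformContinuousOn_hausdorffMNC_image {β X : Type*}
    [PseudoMetricSpace β] [MetricSpace X] {H : Set (β → X)} {K : Set β}
    (hH : EquicontinuousOn (fun ξ : H => (ξ : β → X)) K) (hK : IsCompact K)
    (hb : ∀ s ∈ K, IsBounded ((fun ξ : β → X => ξ s) '' H)) :
    UniformContinuousOn (fun s => hausdorffMNC ((fun ξ : β → X => ξ s) '' H)) K := by
  refine Metric.uniformContinuousOn_iff_le.2 fun ε hε => ?_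
  obtain ⟨δ, hδ, hd⟩ := hH.exists_forall_dist_le_of_isCompact hK hε
  exact ⟨δ, hδ, fun s hs u hu hsu => dist_hausdorffMNC_image_le (hb s hs) (hb u hu) hε.le
    fun ξ hξ => hd s hs u hu hsu ⟨ξ, hξ⟩⟩

theorem exists_pos_nat_div_le {τ δ : ℝ} (hτ : 0 ≤ τ) (hδ : 0 < δ) :
    ∃ n : ℕ, 0 < n ∧ τ / n ≤ δ := by
  obtain ⟨n, hn⟩ := exists_nat_gt (τ / δ)
  have hn0 : (0 : ℝ) < n := (div_nonneg hτ hδ.le).trans_lt hn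
  refine ⟨n, Nat.cast_pos.1 hn0, ?_⟩
  rw [div_le_iff₀ hn0, mul_comm]
  exact ((div_lt_iff₀ hδ).1 hn).le

section RiemannSum

variable {E : Type*} [NormedAddCommGroup E] [NormedSpace ℝ E]

noncomputable def rightRiemannSum (f : ℝ → E) (τ : ℝ) (n : ℕ) : E :=
  ∑ i ∈ Finset.range n, (τ / n) • f ((i + 1 : ℕ) * (τ / n))

theorem natCast_mul_div_mem_Icc {τ : ℝ} (hτ : 0 ≤ τ) {k n : ℕ} (hk : k ≤ n) :
    (k : ℝ) * (τ / n) ∈ Icc 0 τ := by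
  refine ⟨by positivity, ?_⟩
  rcases n.eq_zero_or_pos with rfl | hn
  · simpa using hτ
  calc (k : ℝ) * (τ / n) ≤ n * (τ / n) := by gcongr
    _ = τ := mul_div_cancel₀ τ (by positivity)

theorem dist_integral_smul_endpoint_le [CompleteSpace E] {f : ℝ → E} {a b ε : ℝ} (hab : a ≤ b)
    (hf : IntervalIntegrable f volume a b) (h : ∀ s ∈ Icc a b, dist (f s) (f b) ≤ ε) :
    dist (∫ s in a..b, f s) ((b - a) • f b) ≤ (b - a) * ε := by
  rw [dist_eq_norm, ← intervalIntegral.integral_const,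
    ← intervalIntegral.integral_sub hf intervalIntegrable_const]
  calc ‖∫ s in a..b, (f s - f b)‖ ≤ ε * |b - a| := by
        refine intervalIntegral.norm_integral_le_of_norm_le_const fun s hs => ?_
        rw [uIoc_of_le hab] at hs
        exact dist_eq_norm (f s) (f b) ▸ h s (Ioc_subset_Icc_self hs)
    _ = (b - a) * ε := by rw [abs_of_nonneg (sub_nonneg.2 hab), mul_comm]

theorem dist_integral_rightRiemannSum_le [CompleteSpace E] {f : ℝ → E} {τ ε : ℝ} {n : ℕ}
    (hn : 0 < n) (hτ : 0 ≤ τ) (hf : IntervalIntegrable f volume 0 τ)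
    (h : ∀ s ∈ Icc 0 τ, ∀ u ∈ Icc 0 τ, dist s u ≤ τ / n → dist (f s) (f u) ≤ ε) :
    dist (∫ s in 0..τ, f s) (rightRiemannSum f τ n) ≤ τ * ε := by
  set t : ℕ → ℝ := fun k => k * (τ / n)
  have ht : ∀ k ≤ n, t k ∈ Icc 0 τ := fun k hk => natCast_mul_div_mem_Icc hτ hk
  have hstep : ∀ k, t (k + 1) - t k = τ / n := fun k => by simp only [t]; push_cast; ring
  have hpiece : ∀ k < n, IntervalIntegrable f volume (t k) (t (k + 1)) := fun k hk =>
    hf.mono_set (uIcc_subset_uIcc (Icc_subset_uIcc (ht k hk.le)) (Icc_subset_uIcc (ht _ hk)))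
  have hsplit : ∑ i ∈ Finset.range n, ∫ s in t i..t (i + 1), f s = ∫ s in 0..τ, f s := by
    simpa [t, mul_div_cancel₀ τ (Nat.cast_pos.2 hn).ne'] using
      intervalIntegral.sum_integral_adjacent_intervals hpiece
  rw [← hsplit, rightRiemannSum]
  calc dist (∑ i ∈ Finset.range n, ∫ s in t i..t (i + 1), f s)
        (∑ i ∈ Finset.range n, (τ / n) • f (t (i + 1)))
      ≤ ∑ _i ∈ Finset.range n, τ / n * ε := by
        refine dist_sum_sum_le_of_le _ fun i hi => ?_
        rw [Finset.mem_range] at hi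
        have hle : t i ≤ t (i + 1) := by linarith [hstep i, div_nonneg hτ (Nat.cast_nonneg n)]
        rw [← hstep i]
        refine dist_integral_smul_endpoint_le hle (hpiece i hi) fun s hs => ?_
        exact h s (Icc_subset_Icc (ht i hi.le).1 (ht (i + 1) hi).2 hs) _ (ht (i + 1) hi)
          ((Real.dist_le_of_mem_Icc hs (right_mem_Icc.2 hle)).trans_eq (hstep i))
    _ = τ * ε := by
        rw [Finset.sum_const, Finset.card_range, nsmul_eq_mul]
        field_simp

end RiemannSum

section RiemannSumImage

variable {E : Type*} [NormedAddCommGroup E] [NormedSpace ℝ E] {H : Set (ℝ → E)} {τ : ℝ}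

theorem image_rightRiemannSum_subset (n : ℕ) :
    (fun ξ => rightRiemannSum ξ τ n) '' H ⊆
      ∑ i ∈ Finset.range n, (τ / n) • (fun ξ : ℝ → E => ξ ((i + 1 : ℕ) * (τ / n))) '' H := by
  rintro _ ⟨ξ, hξ, rfl⟩
  exact finsetSum_mem_finsetSum _ _ _ fun _ _ => smul_mem_smul_set ⟨ξ, hξ, rfl⟩

theorem isBounded_image_rightRiemannSum (n : ℕ) (hτ : 0 ≤ τ)
    (hH : ∀ s ∈ Icc 0 τ, IsBounded ((fun ξ : ℝ → E => ξ s) '' H)) :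
    IsBounded ((fun ξ => rightRiemannSum ξ τ n) '' H) :=
  (isBounded_finset_sum fun _ hi =>
    (hH _ (natCast_mul_div_mem_Icc hτ (Finset.mem_range.1 hi))).smul₀ _).subset
      (image_rightRiemannSum_subset n)

theorem hausdorffMNC_image_rightRiemannSum_le (n : ℕ) (hτ : 0 ≤ τ)
    (hH : ∀ s ∈ Icc 0 τ, IsBounded ((fun ξ : ℝ → E => ξ s) '' H)) :
    hausdorffMNC ((fun ξ => rightRiemannSum ξ τ n) '' H) ≤
      rightRiemannSum (fun s => hausdorffMNC ((fun ξ : ℝ → E => ξ s) '' H)) τ n := by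
  have hU : ∀ i ∈ Finset.range n,
      IsBounded ((fun ξ : ℝ → E => ξ ((i + 1 : ℕ) * (τ / n))) '' H) := fun i hi =>
    hH _ (natCast_mul_div_mem_Icc hτ (Finset.mem_range.1 hi))
  calc hausdorffMNC ((fun ξ => rightRiemannSum ξ τ n) '' H)
      ≤ hausdorffMNC
          (∑ i ∈ Finset.range n, (τ / n) • (fun ξ : ℝ → E => ξ ((i + 1 : ℕ) * (τ / n))) '' H) :=
        hausdorffMNC_mono (image_rightRiemannSum_subset n)
          (isBounded_finset_sum fun i hi => (hU i hi).smul₀ _)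
    _ ≤ ∑ i ∈ Finset.range n,
          hausdorffMNC ((τ / n) • (fun ξ : ℝ → E => ξ ((i + 1 : ℕ) * (τ / n))) '' H) :=
        hausdorffMNC_finset_sum_le fun i hi => (hU i hi).smul₀ _
    _ ≤ _ := Finset.sum_le_sum fun i hi => by
        simpa [Real.norm_of_nonneg (by positivity : 0 ≤ τ / n)] using
          hausdorffMNC_smul_le (τ / n) (hU i hi)

theorem hausdorffMNC_integral_le_rightRiemannSum_add [CompleteSpace E] {ε : ℝ} {n : ℕ}
    (hn : 0 < n) (hτ : 0 ≤ τ) (hε : 0 ≤ ε)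
    (hH : ∀ s ∈ Icc 0 τ, IsBounded ((fun ξ : ℝ → E => ξ s) '' H))
    (hint : ∀ ξ ∈ H, IntervalIntegrable ξ volume 0 τ)
    (hmod : ∀ s ∈ Icc 0 τ, ∀ u ∈ Icc 0 τ, dist s u ≤ τ / n → ∀ ξ ∈ H, dist (ξ s) (ξ u) ≤ ε) :
    hausdorffMNC {y : E | ∃ ξ ∈ H, y = ∫ s in (0:ℝ)..τ, ξ s} ≤
      rightRiemannSum (fun s => hausdorffMNC ((fun ξ : ℝ → E => ξ s) '' H)) τ n + τ * ε :=
  calc hausdorffMNC {y : E | ∃ ξ ∈ H, y = ∫ s in (0:ℝ)..τ, ξ s}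
      ≤ hausdorffMNC ((fun ξ => rightRiemannSum ξ τ n) '' H) + τ * ε :=
        hausdorffMNC_le_add_of_forall_exists_dist_le (isBounded_image_rightRiemannSum n hτ hH)
          (by positivity) fun _ ⟨ξ, hξ, hy⟩ => ⟨_, mem_image_of_mem _ hξ, hy ▸
            dist_integral_rightRiemannSum_le hn hτ (hint ξ hξ) fun s hs u hu hsu =>
              hmod s hs u hu hsu ξ hξ⟩
    _ ≤ _ := by gcongr; exact hausdorffMNC_image_rightRiemannSum_le n hτ hH

end RiemannSumImage

theorem hausdorffMNC_set_integral_le_general {V : Type*} [NormedAddCommGroup V]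
    [NormedSpace ℝ V] [CompleteSpace V]
    (a : ℝ) (H : Set (ℝ → V))
    (hbdd : ∃ M : ℝ, ∀ ξ ∈ H, ∀ t ∈ Icc 0 a, ‖ξ t‖ ≤ M)
    (hequi : EquicontinuousOn (fun ξ : H => (ξ : ℝ → V)) (Icc 0 a))
    (hint : ∀ ξ ∈ H, IntegrableOn ξ (Icc 0 a)) :
    ∀ τ ∈ Icc 0 a,
      hausdorffMNC {y : V | ∃ ξ ∈ H, y = ∫ s in (0:ℝ)..τ, ξ s} ≤
        ∫ s in (0:ℝ)..τ, hausdorffMNC {v : V | ∃ ξ ∈ H, ξ s = v} := by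
  rintro τ ⟨hτ0, hτa⟩
  have hIcc : Icc 0 τ ⊆ Icc 0 a := Icc_subset_Icc_right hτa
  have hequiτ := hequi.mono hIcc
  set g : ℝ → ℝ := fun s => hausdorffMNC ((fun ξ : ℝ → V => ξ s) '' H)
  obtain ⟨M, hM⟩ := hbdd
  have hU : ∀ s ∈ Icc 0 τ, IsBounded ((fun ξ : ℝ → V => ξ s) '' H) := fun s hs =>
    isBounded_iff_forall_norm_le.2 ⟨M, by rintro _ ⟨ξ, hξ, rfl⟩; exact hM ξ hξ s (hIcc hs)⟩
  have hg : IntervalIntegrable g volume 0 τ :=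
    (hequiτ.uniformContinuousOn_hausdorffMNC_image isCompact_Icc hU).continuousOn
      |>.intervalIntegrable_of_Icc hτ0
  refine le_of_forall_pos_le_add fun ε hε => ?_
  set ε' := ε / (2 * τ + 1)
  have hε' : 0 < ε' := by positivity
  have hτε' : 2 * τ * ε' ≤ ε := by
    rw [mul_div_assoc', div_le_iff₀ (by positivity)]
    nlinarith
  obtain ⟨δ, hδ, hd⟩ := hequiτ.exists_forall_dist_le_of_isCompact isCompact_Icc hε'
  obtain ⟨n, hn, hnδ⟩ := exists_pos_nat_div_le hτ0 hδ
  have hmod : ∀ s ∈ Icc 0 τ, ∀ u ∈ Icc 0 τ, dist s u ≤ τ / n →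
      ∀ ξ ∈ H, dist (ξ s) (ξ u) ≤ ε' :=
    fun s hs u hu hsu ξ hξ => hd s hs u hu (hsu.trans hnδ) ⟨ξ, hξ⟩
  have hRg : dist (∫ s in 0..τ, g s) (rightRiemannSum g τ n) ≤ τ * ε' :=
    dist_integral_rightRiemannSum_le hn hτ0 hg fun s hs u hu hsu =>
      dist_hausdorffMNC_image_le (hU s hs) (hU u hu) hε'.le (hmod s hs u hu hsu)
  calc hausdorffMNC {y : V | ∃ ξ ∈ H, y = ∫ s in (0:ℝ)..τ, ξ s}
      ≤ rightRiemannSum g τ n + τ * ε' :=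
        hausdorffMNC_integral_le_rightRiemannSum_add hn hτ0 hε'.le hU (fun ξ hξ =>
          (intervalIntegrable_iff_integrableOn_Icc_of_le hτ0).2 ((hint ξ hξ).mono_set hIcc)) hmod
    _ ≤ (∫ s in 0..τ, g s) + 2 * τ * ε' := by
        linarith [(abs_sub_le_iff.1 (Real.dist_eq _ _ ▸ hRg)).2]
    _ ≤ (∫ s in 0..τ, g s) + ε := by gcongr

/-- For a bounded equicontinuous family `H` of functions on `[0,a]`, the MNC of the
set-valued integral is bounded by the integral of the pointwise MNC. -/
theorem hausdorffMNC_set_integral_le {V : Type*} [NormedAddCommGroup V]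
    [NormedSpace ℝ V] [CompleteSpace V] [SecondCountableTopology V]
    [MeasurableSpace V] [BorelSpace V]
    (a : ℝ) (ha : 0 < a) (H : Set (ℝ → V))
    (hcont : ∀ ξ ∈ H, ContinuousOn ξ (Icc 0 a))
    (hbdd : ∃ M : ℝ, ∀ ξ ∈ H, ∀ t ∈ Icc 0 a, ‖ξ t‖ ≤ M)
    (hequi : EquicontinuousOn (fun ξ : H => (ξ : ℝ → V)) (Icc 0 a))
    (hint : ∀ ξ ∈ H, IntegrableOn ξ (Icc 0 a)) :
    ∀ τ ∈ Icc 0 a,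
      hausdorffMNC {y : V | ∃ ξ ∈ H, y = ∫ s in (0:ℝ)..τ, ξ s} ≤
        ∫ s in (0:ℝ)..τ, hausdorffMNC {v : V | ∃ ξ ∈ H, ξ s = v} :=
  hausdorffMNC_set_integral_le_general a H hbdd hequi hint
end
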